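/- Suppose μ − λ − ν = k + 1 with k ∈ ℕ and λ ≠ −s/2 for all s ∈ {0,…,k}. Then the constants β_i = C(k+1,i)·C(2ν+k,i)/C(−2λ,i) for 0 ≤ i ≤ k+1 satisfy the recursion (i+1)(i+2λ)β_{i+1} + (k+1−i)(k−i+2ν)β_i = 0 for 0 ≤ i ≤ k, where C(x,i) = x(x−1)⋯(x−i+1)/i! is the generalized binomial coefficient. Consequently 𝔞(X_h, f, g) = Σ_{i=0}^{k+1} β_i h' f^{(i)} g^{(k+1−i)} is a 1-cocycle of sl(2) with values in D_{λ,ν;μ}. -/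

import Mathlib

/-- `L^μ_h(f) = hf' + μh'f`. -/
noncomputable def Lop (mu : ℝ) (h f : ℝ → ℝ) : ℝ → ℝ :=
  fun x => h x * deriv f x + mu * deriv h x * f x

/-- The generalized binomial coefficient `C(x,i) = x(x−1)⋯(x−i+1)/i!` for real `x`. -/
noncomputable def gbinom (x : ℝ) (i : ℕ) : ℝ :=
  (∏ j ∈ Finset.range i, (x - (j : ℝ))) / (Nat.factorial i : ℝ)

/-- The 1-cochain `𝔞(X_h,f,g) = Σ_{i=0}^{k+1} β_i h' f^{(i)} g^{(k+1−i)}`. -/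
noncomputable def acochain (k : ℕ) (β : ℕ → ℝ) (h f g : ℝ → ℝ) : ℝ → ℝ :=
  fun x => ∑ i ∈ Finset.range (k + 2), β i * deriv h x * deriv^[i] f x * deriv^[k + 1 - i] g x

open scoped ContDiff

section Aux

/-! ### auxiliary lemmas -/

lemma gbinom_succ (x : ℝ) (i : ℕ) :
    gbinom x (i + 1) = gbinom x i * (x - i) / ((i : ℝ) + 1) := by
  unfold gbinom
  rw [Finset.prod_range_succ, Nat.factorial_succ, div_mul_eq_mul_div, div_div]
  push_cast
  rw [mul_comm ((i:ℝ)+1)]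

lemma gbinom_succ_mul (x : ℝ) (i : ℕ) :
    ((i : ℝ) + 1) * gbinom x (i + 1) = gbinom x i * (x - i) := by
  have hi1 : ((i : ℝ) + 1) ≠ 0 := by positivity
  rw [gbinom_succ, mul_comm, div_mul_cancel₀ _ hi1]

lemma rec_part (k : ℕ) (lam nu : ℝ)
    (hlam : ∀ s : ℕ, s ≤ k → lam ≠ -(s : ℝ) / 2)
    (β : ℕ → ℝ)
    (hβ : ∀ i : ℕ, β i = gbinom ((k : ℝ) + 1) i * gbinom (2 * nu + k) i / gbinom (-2 * lam) i) :
    (∀ i : ℕ, i ≤ k →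
      ((i : ℝ) + 1) * ((i : ℝ) + 2 * lam) * β (i + 1)
        + ((k : ℝ) + 1 - (i : ℝ)) * ((k : ℝ) - (i : ℝ) + 2 * nu) * β i = 0) := by
  have hC : ∀ j : ℕ, j ≤ k + 1 → gbinom (-2 * lam) j ≠ 0 := by
    intro j hjk1
    apply div_ne_zero
    · rw [Finset.prod_ne_zero_iff]
      intro m hm
      have hmk : m ≤ k := by have := Finset.mem_range.mp hm; omega
      have := hlam m hmk
      intro hz; apply this; linarith
    · exact_mod_cast (Nat.factorial_ne_zero j)
  intro i hi
  have hq : gbinom (-2 * lam) i ≠ 0 := hC i (by omega)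
  have hq1 : gbinom (-2 * lam) (i + 1) ≠ 0 := hC (i + 1) (by omega)
  have hd : -2 * lam - (i : ℝ) ≠ 0 := by
    have := hlam i (by omega)
    intro hz; apply this; linarith
  have hi1 : ((i : ℝ) + 1) ≠ 0 := by positivity
  set a := gbinom ((k : ℝ) + 1) i with ha
  set b := gbinom (2 * nu + k) i with hb
  set q := gbinom (-2 * lam) i with hqd
  set A₁ := gbinom ((k : ℝ) + 1) (i + 1) with hA1
  set A₂ := gbinom (2 * nu + k) (i + 1) with hA2
  set Q₁ := gbinom (-2 * lam) (i + 1) with hQ1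
  have hE0 : q * β i = a * b := by
    rw [hβ i, ← ha, ← hb, ← hqd, mul_comm, div_mul_cancel₀ _ hq]
  have hE4 : Q₁ * β (i + 1) = A₁ * A₂ := by
    rw [hβ (i + 1), ← hA1, ← hA2, ← hQ1, mul_comm, div_mul_cancel₀ _ hq1]
  have hE1 : ((i : ℝ) + 1) * A₁ = a * (((k : ℝ) + 1) - (i : ℝ)) := gbinom_succ_mul _ i
  have hE2 : ((i : ℝ) + 1) * A₂ = b * ((2 * nu + (k : ℝ)) - (i : ℝ)) := gbinom_succ_mul _ i
  have hE3 : ((i : ℝ) + 1) * Q₁ = q * (-2 * lam - (i : ℝ)) := gbinom_succ_mul _ i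
  have S1 : (((i : ℝ) + 1) * Q₁) * (((i : ℝ) + 1) * β (i + 1))
      = (((i : ℝ) + 1) * A₁) * (((i : ℝ) + 1) * A₂) := by
    linear_combination (((i : ℝ) + 1) ^ 2) * hE4
  rw [hE3, hE1, hE2] at S1
  have hc : (((i : ℝ) + 1) * q * (-2 * lam - (i : ℝ))) ≠ 0 :=
    mul_ne_zero (mul_ne_zero hi1 hq) hd
  have key : (((i : ℝ) + 1) * q * (-2 * lam - (i : ℝ))) *
      (((i : ℝ) + 1) * ((i : ℝ) + 2 * lam) * β (i + 1)
        + ((k : ℝ) + 1 - (i : ℝ)) * ((k : ℝ) - (i : ℝ) + 2 * nu) * β i) = 0 := by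
    linear_combination (((i : ℝ) + 1) * ((i : ℝ) + 2 * lam)) * S1
      + (((k : ℝ) + 1 - (i : ℝ)) * ((k : ℝ) - (i : ℝ) + 2 * nu)
          * (((i : ℝ) + 1) * (-2 * lam - (i : ℝ)))) * hE0
  exact (mul_eq_zero.mp key).resolve_left hc

lemma smooth_iter {f : ℝ → ℝ} (hf : ContDiff ℝ ∞ f) (n : ℕ) :
    ContDiff ℝ ∞ (deriv^[n] f) := ContDiff.iterate_deriv n hf

lemma hasDerivAt_iter {f : ℝ → ℝ} (hf : ContDiff ℝ ∞ f) (n : ℕ) (x : ℝ) :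
    HasDerivAt (deriv^[n] f) (deriv^[n+1] f x) x := by
  have h := ((smooth_iter hf n).differentiable (by simp)).differentiableAt
    (x := x)
  have := h.hasDerivAt
  rwa [show deriv^[n+1] f x = deriv (deriv^[n] f) x by rw [Function.iterate_succ_apply']]

/-- iterated derivative of `x ↦ x * G x`. -/
lemma iter_mul_id {G : ℝ → ℝ} (hG : ContDiff ℝ ∞ G) (i : ℕ) :
    deriv^[i+1] (fun x => x * G x)
      = fun x => x * deriv^[i+1] G x + ((i : ℝ) + 1) * deriv^[i] G x := by
  induction i with
  | zero =>
    funext x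
    have h := (hasDerivAt_id x).mul (hasDerivAt_iter hG 0 x)
    simp only [Function.iterate_zero, Function.iterate_one, zero_add, id_eq, one_mul,
      Nat.cast_zero, Pi.mul_def] at h ⊢
    rw [h.deriv]
    ring
  | succ i ih =>
    funext x
    rw [Function.iterate_succ_apply', ih]
    have h1 := (hasDerivAt_id x).mul (hasDerivAt_iter hG (i+1) x)
    have h2 := (hasDerivAt_iter hG i x).const_mul ((i : ℝ) + 1)
    have h := h1.add h2
    simp only [id_eq, Pi.mul_def, Pi.add_def] at h
    rw [h.deriv]
    push_cast
    ring

/-- iterated derivative of `x ↦ x f'(x) + c f(x)`. -/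
lemma iterB {f : ℝ → ℝ} (hf : ContDiff ℝ ∞ f) (c : ℝ) (i : ℕ) :
    deriv^[i] (fun x => x * deriv f x + c * f x)
      = fun x => x * deriv^[i+1] f x + ((i : ℝ) + c) * deriv^[i] f x := by
  induction i with
  | zero =>
    funext x
    simp only [Function.iterate_zero, Function.iterate_one, zero_add, id_eq, Nat.cast_zero]
  | succ i ih =>
    funext x
    rw [Function.iterate_succ_apply', ih]
    have h1 := (hasDerivAt_id x).mul (hasDerivAt_iter hf (i+1) x)
    have h2 := (hasDerivAt_iter hf i x).const_mul ((i : ℝ) + c)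
    have h := h1.add h2
    simp only [id_eq, Pi.mul_def, Pi.add_def] at h
    rw [h.deriv]
    push_cast
    ring

/-- iterated derivative of `x ↦ x² f'(x) + c·2x·f(x)`. -/
lemma iterC {f : ℝ → ℝ} (hf : ContDiff ℝ ∞ f) (c : ℝ) (i : ℕ) :
    deriv^[i] (fun x => x ^ 2 * deriv f x + c * (2 * x) * f x)
      = fun x => x ^ 2 * deriv^[i+1] f x + 2 * ((i : ℝ) + c) * x * deriv^[i] f x
          + (i : ℝ) * ((i : ℝ) - 1 + 2 * c) * deriv^[i-1] f x := by
  have hfd : ContDiff ℝ ∞ (deriv f) := (contDiff_infty_iff_deriv.mp hf).2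
  have hG : ContDiff ℝ ∞ (fun x => x * deriv f x + 2 * c * f x) :=
    (contDiff_id.mul hfd).add (contDiff_const.mul hf)
  have hfun : (fun x : ℝ => x ^ 2 * deriv f x + c * (2 * x) * f x)
      = fun x => x * ((fun y => y * deriv f y + 2 * c * f y) x) := by
    funext x; ring
  rw [hfun]
  cases i with
  | zero =>
    funext x
    simp only [Function.iterate_zero, Function.iterate_one, zero_add, id_eq, Nat.cast_zero]
    ring
  | succ i =>
    funext x
    rw [iter_mul_id hG i]
    simp only [iterB hf (2*c)]
    have : (i + 1) - 1 = i := by omega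
    rw [this]
    push_cast
    ring

noncomputable def Ssum (k : ℕ) (β : ℕ → ℝ) (f g : ℝ → ℝ) : ℝ → ℝ :=
  fun x => ∑ i ∈ Finset.range (k + 2), β i * deriv^[i] f x * deriv^[k + 1 - i] g x

lemma Lop_one (c : ℝ) (f : ℝ → ℝ) : Lop c (fun _ => 1) f = deriv f := by
  funext x; simp [Lop]

lemma Lop_id (c : ℝ) (f : ℝ → ℝ) :
    Lop c (fun y => y) f = fun x => x * deriv f x + c * f x := by
  funext x; simp [Lop, deriv_id'']

lemma Lop_sq (c : ℝ) (f : ℝ → ℝ) :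
    Lop c (fun y => y ^ 2) f = fun x => x ^ 2 * deriv f x + c * (2 * x) * f x := by
  funext x
  simp only [Lop, deriv_pow_field]
  norm_num

lemma hasDerivAt_Ssum (k : ℕ) (β : ℕ → ℝ) {f g : ℝ → ℝ}
    (hf : ContDiff ℝ ∞ f) (hg : ContDiff ℝ ∞ g) (x : ℝ) :
    HasDerivAt (Ssum k β f g)
      (∑ i ∈ Finset.range (k + 2),
        (β i * deriv^[i+1] f x * deriv^[k+1-i] g x
          + β i * deriv^[i] f x * deriv^[k+1-i+1] g x)) x := by
  apply HasDerivAt.fun_sum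
  intro i _
  exact ((hasDerivAt_iter hf i x).const_mul (β i)).mul (hasDerivAt_iter hg (k+1-i) x)

lemma Ssum_deriv_left (k : ℕ) (β : ℕ → ℝ) (f g : ℝ → ℝ) (x : ℝ) :
    Ssum k β (deriv f) g x
      = ∑ i ∈ Finset.range (k + 2), β i * deriv^[i+1] f x * deriv^[k+1-i] g x := by
  unfold Ssum
  simp only [← Function.iterate_succ_apply]

lemma Ssum_deriv_right (k : ℕ) (β : ℕ → ℝ) (f g : ℝ → ℝ) (x : ℝ) :
    Ssum k β f (deriv g) x
      = ∑ i ∈ Finset.range (k + 2), β i * deriv^[i] f x * deriv^[k+1-i+1] g x := by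
  unfold Ssum
  simp only [← Function.iterate_succ_apply]

lemma compute_one (k : ℕ) (β : ℕ → ℝ) (mu lam nu : ℝ) {f g : ℝ → ℝ}
    (hf : ContDiff ℝ ∞ f) (hg : ContDiff ℝ ∞ g) (x : ℝ) :
    Lop mu (fun _ => 1) (Ssum k β f g) x
      - Ssum k β (Lop lam (fun _ => 1) f) g x
      - Ssum k β f (Lop nu (fun _ => 1) g) x = 0 := by
  rw [Lop_one, Lop_one, Lop_one, (hasDerivAt_Ssum k β hf hg x).deriv,
    Ssum_deriv_left, Ssum_deriv_right, Finset.sum_add_distrib]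
  ring

lemma compute_id (k : ℕ) (β : ℕ → ℝ) (mu lam nu : ℝ) {f g : ℝ → ℝ}
    (hf : ContDiff ℝ ∞ f) (hg : ContDiff ℝ ∞ g)
    (hmu : mu = lam + nu + (k : ℝ) + 1) (x : ℝ) :
    Lop mu (fun y => y) (Ssum k β f g) x
      - Ssum k β (Lop lam (fun y => y) f) g x
      - Ssum k β f (Lop nu (fun y => y) g) x = 0 := by
  subst hmu
  rw [Lop_id lam, Lop_id nu]
  simp only [Lop, deriv_id'']
  rw [(hasDerivAt_Ssum k β hf hg x).deriv]
  simp only [Ssum, iterB hf lam, iterB hg nu]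
  rw [Finset.mul_sum, Finset.mul_sum, ← Finset.sum_add_distrib, ← Finset.sum_sub_distrib,
    ← Finset.sum_sub_distrib]
  apply Finset.sum_eq_zero
  intro i hi
  have hik : i ≤ k + 1 := by have := Finset.mem_range.mp hi; omega
  have hc : ((k + 1 - i : ℕ) : ℝ) = (k : ℝ) + 1 - (i : ℝ) := by
    rw [Nat.cast_sub (by omega)]; push_cast; ring
  rw [hc]
  ring

lemma leftover (k : ℕ) (β : ℕ → ℝ) (lam nu : ℝ) (f g : ℝ → ℝ)
    (hrec : ∀ i : ℕ, i ≤ k →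
      ((i : ℝ) + 1) * ((i : ℝ) + 2 * lam) * β (i + 1)
        + ((k : ℝ) + 1 - (i : ℝ)) * ((k : ℝ) - (i : ℝ) + 2 * nu) * β i = 0) (x : ℝ) :
    ∑ i ∈ Finset.range (k + 2),
        β i * ((i : ℝ) * ((i : ℝ) - 1 + 2 * lam)) * deriv^[i-1] f x * deriv^[k+1-i] g x
      + ∑ i ∈ Finset.range (k + 2),
        β i * (((k : ℝ) + 1 - (i : ℝ)) * ((k : ℝ) + 1 - (i : ℝ) - 1 + 2 * nu))
          * deriv^[i] f x * deriv^[k+1-i-1] g x = 0 := by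
  rw [Finset.sum_range_succ' _ (k + 1), Finset.sum_range_succ _ (k + 1)]
  have e1 : β 0 * ((0 : ℕ) * (((0 : ℕ) : ℝ) - 1 + 2 * lam)) * deriv^[0-1] f x
      * deriv^[k+1-0] g x = 0 := by norm_num
  have e2 : β (k+1) * (((k : ℝ) + 1 - ((k+1 : ℕ) : ℝ))
      * ((k : ℝ) + 1 - ((k+1 : ℕ) : ℝ) - 1 + 2 * nu))
      * deriv^[k+1] f x * deriv^[k+1-(k+1)-1] g x = 0 := by push_cast; ring
  rw [e1, e2, add_zero, add_zero, ← Finset.sum_add_distrib]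
  apply Finset.sum_eq_zero
  intro i hi
  have hik : i ≤ k := by have := Finset.mem_range.mp hi; omega
  have h1 : (i + 1) - 1 = i := by omega
  have h2 : k + 1 - (i + 1) = k - i := by omega
  have h3 : k + 1 - i - 1 = k - i := by omega
  rw [h1, h2, h3]
  push_cast
  linear_combination (deriv^[i] f x * deriv^[k-i] g x) * hrec i hik

lemma compute_sq (k : ℕ) (β : ℕ → ℝ) (mu lam nu : ℝ) {f g : ℝ → ℝ}
    (hf : ContDiff ℝ ∞ f) (hg : ContDiff ℝ ∞ g)
    (hmu : mu = lam + nu + (k : ℝ) + 1)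
    (hrec : ∀ i : ℕ, i ≤ k →
      ((i : ℝ) + 1) * ((i : ℝ) + 2 * lam) * β (i + 1)
        + ((k : ℝ) + 1 - (i : ℝ)) * ((k : ℝ) - (i : ℝ) + 2 * nu) * β i = 0) (x : ℝ) :
    Lop mu (fun y => y ^ 2) (Ssum k β f g) x
      - Ssum k β (Lop lam (fun y => y ^ 2) f) g x
      - Ssum k β f (Lop nu (fun y => y ^ 2) g) x = 0 := by
  subst hmu
  rw [Lop_sq lam, Lop_sq nu,
    show Lop (lam + nu + (k : ℝ) + 1) (fun y => y ^ 2) (Ssum k β f g) x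
      = x ^ 2 * deriv (Ssum k β f g) x
        + (lam + nu + (k : ℝ) + 1) * (2 * x) * Ssum k β f g x from congrFun (Lop_sq _ _) x]
  rw [(hasDerivAt_Ssum k β hf hg x).deriv]
  simp only [Ssum, iterC hf lam, iterC hg nu]
  rw [Finset.mul_sum, Finset.mul_sum, ← Finset.sum_add_distrib, ← Finset.sum_sub_distrib,
    ← Finset.sum_sub_distrib]
  have key : ∀ i ∈ Finset.range (k + 2),
      x ^ 2 * (β i * deriv^[i+1] f x * deriv^[k+1-i] g x
          + β i * deriv^[i] f x * deriv^[k+1-i+1] g x)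
        + (lam + nu + (k : ℝ) + 1) * (2 * x) * (β i * deriv^[i] f x * deriv^[k+1-i] g x)
        - β i * (x ^ 2 * deriv^[i+1] f x + 2 * ((i : ℝ) + lam) * x * deriv^[i] f x
            + (i : ℝ) * ((i : ℝ) - 1 + 2 * lam) * deriv^[i-1] f x) * deriv^[k+1-i] g x
        - β i * deriv^[i] f x * (x ^ 2 * deriv^[k+1-i+1] g x
            + 2 * (((k+1-i : ℕ) : ℝ) + nu) * x * deriv^[k+1-i] g x
            + ((k+1-i : ℕ) : ℝ) * (((k+1-i : ℕ) : ℝ) - 1 + 2 * nu) * deriv^[k+1-i-1] g x)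
      = -(β i * ((i : ℝ) * ((i : ℝ) - 1 + 2 * lam)) * deriv^[i-1] f x * deriv^[k+1-i] g x
          + β i * (((k : ℝ) + 1 - (i : ℝ)) * ((k : ℝ) + 1 - (i : ℝ) - 1 + 2 * nu))
            * deriv^[i] f x * deriv^[k+1-i-1] g x) := by
    intro i hi
    have hik : i ≤ k + 1 := by have := Finset.mem_range.mp hi; omega
    have hc : ((k + 1 - i : ℕ) : ℝ) = (k : ℝ) + 1 - (i : ℝ) := by
      rw [Nat.cast_sub (by omega)]; push_cast; ring
    rw [hc]
    ring
  rw [Finset.sum_congr rfl key]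
  rw [Finset.sum_neg_distrib, Finset.sum_add_distrib]
  rw [leftover k β lam nu f g hrec x, neg_zero]

lemma acochain_pt (k : ℕ) (β : ℕ → ℝ) (h f g : ℝ → ℝ) (x : ℝ) :
    acochain k β h f g x = deriv h x * Ssum k β f g x := by
  unfold acochain Ssum
  rw [Finset.mul_sum]
  apply Finset.sum_congr rfl
  intro i _
  ring

lemma acochain_one (k : ℕ) (β : ℕ → ℝ) (f g : ℝ → ℝ) :
    acochain k β (fun _ => (1:ℝ)) f g = fun _ => (0:ℝ) := by
  funext x
  simp [acochain]

lemma acochain_id (k : ℕ) (β : ℕ → ℝ) (f g : ℝ → ℝ) :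
    acochain k β (fun y => y) f g = Ssum k β f g := by
  funext x
  rw [acochain_pt, deriv_id'', one_mul]

lemma acochain_sq (k : ℕ) (β : ℕ → ℝ) (f g : ℝ → ℝ) :
    acochain k β (fun y => y ^ 2) f g = fun x => 2 * x * Ssum k β f g x := by
  funext x
  rw [acochain_pt, deriv_pow_field]
  norm_num

end Aux

/-- If `μ − λ − ν = k+1` and `λ ≠ −s/2` for all `s ∈ {0,…,k}`, the coefficients
`β_i = C(k+1,i)C(2ν+k,i)/C(−2λ,i)` satisfy
`(i+1)(i+2λ)β_{i+1} + (k+1−i)(k−i+2ν)β_i = 0` for `0 ≤ i ≤ k`, and consequently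
`𝔞(X_h,f,g) = Σ β_i h' f^{(i)} g^{(k+1−i)}` is a 1-cocycle of `sl(2)` with values
in `D_{λ,ν;μ}`. -/
theorem stmt_8 (k : ℕ) (lam nu mu : ℝ)
    (hmu : mu = lam + nu + (k : ℝ) + 1)
    (hlam : ∀ s : ℕ, s ≤ k → lam ≠ -(s : ℝ) / 2)
    (β : ℕ → ℝ)
    (hβ : ∀ i : ℕ, β i = gbinom ((k : ℝ) + 1) i * gbinom (2 * nu + k) i / gbinom (-2 * lam) i) :
    (∀ i : ℕ, i ≤ k →
      ((i : ℝ) + 1) * ((i : ℝ) + 2 * lam) * β (i + 1)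
        + ((k : ℝ) + 1 - (i : ℝ)) * ((k : ℝ) - (i : ℝ) + 2 * nu) * β i = 0) ∧
    (∀ h₁ ∈ ({fun _ => 1, fun x => x, fun x => x ^ 2} : Set (ℝ → ℝ)),
      ∀ h₂ ∈ ({fun _ => 1, fun x => x, fun x => x ^ 2} : Set (ℝ → ℝ)),
      ∀ f g : ℝ → ℝ, ContDiff ℝ (⊤ : ℕ∞) f → ContDiff ℝ (⊤ : ℕ∞) g → ∀ x : ℝ,
        acochain k β (fun y => h₁ y * deriv h₂ y - deriv h₁ y * h₂ y) f g x =
          (Lop mu h₁ (acochain k β h₂ f g) x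
            - acochain k β h₂ (Lop lam h₁ f) g x
            - acochain k β h₂ f (Lop nu h₁ g) x)
          - (Lop mu h₂ (acochain k β h₁ f g) x
            - acochain k β h₁ (Lop lam h₂ f) g x
            - acochain k β h₁ f (Lop nu h₂ g) x)) := by
  have hrec := rec_part k lam nu hlam β hβ
  refine ⟨hrec, ?_⟩
  intro h₁ hh₁ h₂ hh₂ f g hf hg x
  have hf' : ContDiff ℝ ∞ f := hf.of_le (by simp)
  have hg' : ContDiff ℝ ∞ g := hg.of_le (by simp)
  -- diagonal helper
  have hdiag : ∀ h : ℝ → ℝ,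
      acochain k β (fun y => h y * deriv h y - deriv h y * h y) f g x =
        (Lop mu h (acochain k β h f g) x
          - acochain k β h (Lop lam h f) g x
          - acochain k β h f (Lop nu h g) x)
        - (Lop mu h (acochain k β h f g) x
          - acochain k β h (Lop lam h f) g x
          - acochain k β h f (Lop nu h g) x) := by
    intro h
    rw [sub_self, show (fun y => h y * deriv h y - deriv h y * h y) = fun _ => (0:ℝ)
      from funext fun y => by ring]
    simp [acochain]
  -- swap helper
  have hswap : ∀ a b : ℝ → ℝ,
      (acochain k β (fun y => a y * deriv b y - deriv a y * b y) f g x =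
        (Lop mu a (acochain k β b f g) x
          - acochain k β b (Lop lam a f) g x
          - acochain k β b f (Lop nu a g) x)
        - (Lop mu b (acochain k β a f g) x
          - acochain k β a (Lop lam b f) g x
          - acochain k β a f (Lop nu b g) x)) →
      (acochain k β (fun y => b y * deriv a y - deriv b y * a y) f g x =
        (Lop mu b (acochain k β a f g) x
          - acochain k β a (Lop lam b f) g x
          - acochain k β a f (Lop nu b g) x)
        - (Lop mu a (acochain k β b f g) x
          - acochain k β b (Lop lam a f) g x
          - acochain k β b f (Lop nu a g) x)) := by
    intro a b hab
    rw [show (fun y => b y * deriv a y - deriv b y * a y)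
        = fun y => -((fun z => a z * deriv b z - deriv a z * b z) y)
      from funext fun y => by simp; ring]
    have hneg : acochain k β (fun y => -((fun z => a z * deriv b z - deriv a z * b z) y)) f g x
        = - acochain k β (fun z => a z * deriv b z - deriv a z * b z) f g x := by
      rw [acochain_pt, acochain_pt, deriv.fun_neg]
      ring
    rw [hneg, hab]
    ring
  -- case (1, x)
  have caseA :
      acochain k β (fun y => (fun _ => (1:ℝ)) y * deriv (fun x => x) y
          - deriv (fun _ => (1:ℝ)) y * (fun x => x) y) f g x =
        (Lop mu (fun _ => (1:ℝ)) (acochain k β (fun x => x) f g) x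
          - acochain k β (fun x => x) (Lop lam (fun _ => (1:ℝ)) f) g x
          - acochain k β (fun x => x) f (Lop nu (fun _ => (1:ℝ)) g) x)
        - (Lop mu (fun x => x) (acochain k β (fun _ => (1:ℝ)) f g) x
          - acochain k β (fun _ => (1:ℝ)) (Lop lam (fun x => x) f) g x
          - acochain k β (fun _ => (1:ℝ)) f (Lop nu (fun x => x) g) x) := by
    rw [show (fun y => (fun _ => (1:ℝ)) y * deriv (fun x => x) y
        - deriv (fun _ => (1:ℝ)) y * (fun x => x) y) = fun _ => (1:ℝ)
      from funext fun y => by simp]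
    rw [acochain_id k β f g, acochain_id k β (Lop lam (fun _ => (1:ℝ)) f) g,
      acochain_id k β f (Lop nu (fun _ => (1:ℝ)) g),
      acochain_one k β f g, acochain_one k β (Lop lam (fun x => x) f) g,
      acochain_one k β f (Lop nu (fun x => x) g)]
    have h1 := compute_one k β mu lam nu hf' hg' x
    have h2 : Lop mu (fun x => x) (fun _ => (0:ℝ)) x = 0 := by simp [Lop]
    have h3 : acochain k β (fun _ => (1:ℝ)) f g x = 0 := by simp [acochain]
    simp only [h3]
    rw [h2]
    linarith [h1]
  -- case (1, x²)
  have caseB :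
      acochain k β (fun y => (fun _ => (1:ℝ)) y * deriv (fun x => x ^ 2) y
          - deriv (fun _ => (1:ℝ)) y * (fun x => x ^ 2) y) f g x =
        (Lop mu (fun _ => (1:ℝ)) (acochain k β (fun x => x ^ 2) f g) x
          - acochain k β (fun x => x ^ 2) (Lop lam (fun _ => (1:ℝ)) f) g x
          - acochain k β (fun x => x ^ 2) f (Lop nu (fun _ => (1:ℝ)) g) x)
        - (Lop mu (fun x => x ^ 2) (acochain k β (fun _ => (1:ℝ)) f g) x
          - acochain k β (fun _ => (1:ℝ)) (Lop lam (fun x => x ^ 2) f) g x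
          - acochain k β (fun _ => (1:ℝ)) f (Lop nu (fun x => x ^ 2) g) x) := by
    rw [show (fun y => (fun _ => (1:ℝ)) y * deriv (fun x => x ^ 2) y
        - deriv (fun _ => (1:ℝ)) y * (fun x => x ^ 2) y) = fun y => 2 * y
      from funext fun y => by simp [deriv_pow_field]]
    have hLHS : acochain k β (fun y => 2 * y) f g x = 2 * Ssum k β f g x := by
      rw [acochain_pt]
      have : deriv (fun y : ℝ => 2 * y) x = 2 := by
        simpa using ((hasDerivAt_id x).const_mul (2:ℝ)).deriv
      rw [this]
    rw [hLHS, Lop_one lam f, Lop_one nu g,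
      acochain_sq k β f g, acochain_sq k β (deriv f) g, acochain_sq k β f (deriv g),
      acochain_one k β (Lop lam (fun x => x ^ 2) f) g,
      acochain_one k β f (Lop nu (fun x => x ^ 2) g),
      Lop_one mu]
    have h2 : Lop mu (fun x => x ^ 2) (acochain k β (fun _ => (1:ℝ)) f g) x = 0 := by
      rw [acochain_one k β f g]; simp [Lop]
    rw [h2]
    have hprod := ((hasDerivAt_id x).const_mul (2:ℝ)).mul (hasDerivAt_Ssum k β hf' hg' x)
    simp only [id_eq, mul_one, Pi.mul_def] at hprod
    rw [hprod.deriv]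
    beta_reduce
    rw [Ssum_deriv_left, Ssum_deriv_right, Finset.sum_add_distrib]
    ring
  -- case (x, x²)
  have caseC :
      acochain k β (fun y => (fun x => x) y * deriv (fun x => x ^ 2) y
          - deriv (fun x => x) y * (fun x => x ^ 2) y) f g x =
        (Lop mu (fun x => x) (acochain k β (fun x => x ^ 2) f g) x
          - acochain k β (fun x => x ^ 2) (Lop lam (fun x => x) f) g x
          - acochain k β (fun x => x ^ 2) f (Lop nu (fun x => x) g) x)
        - (Lop mu (fun x => x ^ 2) (acochain k β (fun x => x) f g) x
          - acochain k β (fun x => x) (Lop lam (fun x => x ^ 2) f) g x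
          - acochain k β (fun x => x) f (Lop nu (fun x => x ^ 2) g) x) := by
    rw [show (fun y => (fun x => x) y * deriv (fun x => x ^ 2) y
        - deriv (fun x => x) y * (fun x => x ^ 2) y) = fun y => y ^ 2
      from funext fun y => by simp [deriv_pow_field, deriv_id'']; ring]
    have hLHS : acochain k β (fun y => y ^ 2) f g x = 2 * x * Ssum k β f g x :=
      congrFun (acochain_sq k β f g) x
    rw [hLHS, acochain_sq k β f g,
      acochain_sq k β (Lop lam (fun x => x) f) g,
      acochain_sq k β f (Lop nu (fun x => x) g),
      acochain_id k β f g,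
      acochain_id k β (Lop lam (fun x => x ^ 2) f) g,
      acochain_id k β f (Lop nu (fun x => x ^ 2) g)]
    have h2 := compute_sq k β mu lam nu hf' hg' hmu hrec x
    have hid := compute_id k β mu lam nu hf' hg' hmu x
    rw [show Lop mu (fun y => y) (Ssum k β f g) x
        = x * deriv (Ssum k β f g) x + mu * Ssum k β f g x
      from congrFun (Lop_id mu _) x, (hasDerivAt_Ssum k β hf' hg' x).deriv] at hid
    rw [show Lop mu (fun x => x) (fun x => 2 * x * Ssum k β f g x) x
        = x * deriv (fun x => 2 * x * Ssum k β f g x) x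
            + mu * (2 * x * Ssum k β f g x)
      from congrFun (Lop_id mu _) x]
    have hprod := ((hasDerivAt_id x).const_mul (2:ℝ)).mul (hasDerivAt_Ssum k β hf' hg' x)
    simp only [id_eq, mul_one, Pi.mul_def] at hprod
    rw [hprod.deriv]
    linear_combination h2 - (2 * x) * hid
  -- dispatch the nine cases
  simp only [Set.mem_insert_iff, Set.mem_singleton_iff] at hh₁ hh₂
  rcases hh₁ with rfl | rfl | rfl <;> rcases hh₂ with rfl | rfl | rfl
  · exact hdiag _
  · exact caseA
  · exact caseB
  · exact hswap _ _ caseA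
  · exact hdiag _
  · exact caseC
  · exact hswap _ _ caseB
  · exact hswap _ _ caseC
  · exact hdiag _
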